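/- For every ℓ ≥ 2, the set D_{3ℓ}(H_ℓ) has a witness (namely H_ℓ), it consists of k = ℓ + 2 isomorphism classes of posets of size n = 3ℓ, its smallest witness has size |H_ℓ| = 6ℓ − 2, every poset in D_{3ℓ}(H_ℓ) as well as H_ℓ itself has height at most 2, and for any constant c ∈ ℕ the smallest witness size 6ℓ − 2 is strictly greater than n + k + c = 4ℓ + 2 + c whenever ℓ > 2 + c/2. -/

import Mathlib

/-!
Formalization framework: finite posets are bundled as `FinPartOrd.{0}`, downsets are
`Finset`s of elements, unlabelled posets are isomorphism classes (`UPoset`), and a witness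
of a set `Γ` of unlabelled posets at size `n` is a finite poset whose set of size-`n`
downsets, up to isomorphism, is exactly `Γ`.
-/

attribute [local instance] Classical.propDecidable

noncomputable section

open Finset

/-- `D` is a downset of the finite poset `Q`. -/
def IsDownset (Q : FinPartOrd.{0}) (D : Finset ↥Q) : Prop :=
  ∀ ⦃a b : ↥Q⦄, a ∈ D → b ≤ a → b ∈ D

/-- The induced subposet of `Q` on a finset `D` of its elements. -/
def subposet (Q : FinPartOrd.{0}) (D : Finset ↥Q) : FinPartOrd.{0} :=
  FinPartOrd.of {x : ↥Q // x ∈ D}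

/-- The isomorphism setoid on finite posets. -/
def isoSetoid : Setoid FinPartOrd.{0} where
  r P Q := Nonempty (↥P ≃o ↥Q)
  iseqv := ⟨fun _ => ⟨OrderIso.refl _⟩, fun ⟨e⟩ => ⟨e.symm⟩, fun ⟨e⟩ ⟨f⟩ => ⟨e.trans f⟩⟩

/-- Unlabelled finite posets: isomorphism classes of finite posets. -/
def UPoset := Quotient isoSetoid

/-- The isomorphism class of a finite poset. -/
def cls (P : FinPartOrd.{0}) : UPoset := Quotient.mk isoSetoid P

/-- The number of elements of a finite poset. -/
def size (Q : FinPartOrd.{0}) : ℕ := Fintype.card ↥Q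

/-- The size of an isomorphism class of finite posets. -/
def usize : UPoset → ℕ :=
  Quotient.lift size fun _ _ h => h.elim fun e => Fintype.card_congr e.toEquiv

/-- `D_n(Q)` : the set of downsets of `Q` of size `n`, up to isomorphism. -/
def DSet (n : ℕ) (Q : FinPartOrd.{0}) : Set UPoset :=
  {c | ∃ D : Finset ↥Q, IsDownset Q D ∧ D.card = n ∧ cls (subposet Q D) = c}

/-- `d_n(Q)` : the number of isomorphism classes of downsets of `Q` of size `n`. -/
def dNum (n : ℕ) (Q : FinPartOrd.{0}) : ℕ := (DSet n Q).ncard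

/-- `D(Q)` : the set of nonempty downsets of `Q`, up to isomorphism. -/
def DAllSet (Q : FinPartOrd.{0}) : Set UPoset :=
  {c | ∃ D : Finset ↥Q, IsDownset Q D ∧ D.Nonempty ∧ cls (subposet Q D) = c}

/-- `Q` is a witness of the set `Γ` of unlabelled posets (at size `n`): the set of size-`n`
downsets of `Q`, up to isomorphism, is exactly `Γ`. -/
def IsWitness (n : ℕ) (Γ : Set UPoset) (Q : FinPartOrd.{0}) : Prop := DSet n Q = Γ

/-- `Q` is a minimal witness of `Γ` : `Q` is a witness and no proper downset of `Q` is
itself a witness of `Γ`. -/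
def IsMinimalWitness (n : ℕ) (Γ : Set UPoset) (Q : FinPartOrd.{0}) : Prop :=
  IsWitness n Γ Q ∧
    ∀ D : Finset ↥Q, IsDownset Q D → D ≠ Finset.univ → ¬IsWitness n Γ (subposet Q D)

/-- The height of an element: the number of elements of a longest chain whose maximum is `x`. -/
def heightEl (Q : FinPartOrd.{0}) (x : ↥Q) : ℕ :=
  sSup {k | ∃ c : Finset ↥Q, IsChain (· ≤ ·) (c : Set ↥Q) ∧ x ∈ c ∧ (∀ y ∈ c, y ≤ x) ∧ c.card = k}

/-- The height of a finite poset: the number of elements of a longest chain. -/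
def posetHeight (Q : FinPartOrd.{0}) : ℕ :=
  sSup {k | ∃ c : Finset ↥Q, IsChain (· ≤ ·) (c : Set ↥Q) ∧ c.card = k}

/-- A finite poset is Newtonian if every element of level `i` covers every element of
level `i - 1`. -/
def Newtonian (Q : FinPartOrd.{0}) : Prop :=
  ∀ x y : ↥Q, heightEl Q y = heightEl Q x + 1 → x ⋖ y

/-- A finite poset is connected if it is nonempty and any two elements are joined by a
comparability path. -/
def ConnectedPoset (Q : FinPartOrd.{0}) : Prop :=
  Nonempty ↥Q ∧ ∀ x y : ↥Q, Relation.ReflTransGen (fun a b : ↥Q => a ≤ b ∨ b ≤ a) x y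

/-- `x` is a maximal element of the subset `W` of `Q`. -/
def IsMaxIn (Q : FinPartOrd.{0}) (W : Finset ↥Q) (x : ↥Q) : Prop :=
  x ∈ W ∧ ∀ y ∈ W, x ≤ y → y = x

/-- `x` is a maximal element of the finite poset `R`. -/
def IsMaxEl (R : FinPartOrd.{0}) (x : ↥R) : Prop := ∀ y, x ≤ y → y = x

/-- A poset of type 𝒲 : the disjoint union of two connected Newtonian posets that are not
isomorphic, but which only differ in one maximal element (they become isomorphic after the
removal of a suitable maximal element from each). -/
def TypeW (P : FinPartOrd.{0}) : Prop :=
  ∃ W₁ W₂ : Finset ↥P,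
    W₁ ∪ W₂ = Finset.univ ∧ Disjoint W₁ W₂ ∧
    (∀ x ∈ W₁, ∀ y ∈ W₂, ¬x ≤ y ∧ ¬y ≤ x) ∧
    ConnectedPoset (subposet P W₁) ∧ ConnectedPoset (subposet P W₂) ∧
    Newtonian (subposet P W₁) ∧ Newtonian (subposet P W₂) ∧
    ¬Nonempty (↥(subposet P W₁) ≃o ↥(subposet P W₂)) ∧
    ∃ x y, IsMaxIn P W₁ x ∧ IsMaxIn P W₂ y ∧
      Nonempty (↥(subposet P (W₁.erase x)) ≃o ↥(subposet P (W₂.erase y)))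

/-- An antichain on `i` elements. -/
def AntichainFin (i : ℕ) : Type := Fin i

instance (i : ℕ) : PartialOrder (AntichainFin i) where
  le x y := x = y
  le_refl _ := rfl
  le_trans a b c h₁ h₂ := show a = c from (show a = b from h₁).trans (show b = c from h₂)
  le_antisymm _ _ h _ := h

instance (i : ℕ) : Fintype (AntichainFin i) := inferInstanceAs (Fintype (Fin i))
instance (i : ℕ) : Fintype (WithTop (AntichainFin i)) :=
  inferInstanceAs (Fintype (Option (Fin i)))

/-- `Λ_i`: the poset with `i` minimal elements and one maximal element above all of them. -/
def Lambda (i : ℕ) : FinPartOrd.{0} := FinPartOrd.of (WithTop (AntichainFin i))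

/-- `k` disjoint copies of a poset `α`. -/
def Copies (k : ℕ) (α : Type) : Type := Fin k × α

instance (k : ℕ) (α : Type) [PartialOrder α] : PartialOrder (Copies k α) where
  le x y := x.1 = y.1 ∧ x.2 ≤ y.2
  le_refl _ := ⟨rfl, le_refl _⟩
  le_trans _ _ _ h₁ h₂ := ⟨h₁.1.trans h₂.1, le_trans h₁.2 h₂.2⟩
  le_antisymm x y h₁ h₂ := by
    obtain ⟨x₁, x₂⟩ := x
    obtain ⟨y₁, y₂⟩ := y
    obtain ⟨h, h'⟩ := h₁
    cases h
    exact congrArg _ (le_antisymm h' h₂.2)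

instance (k : ℕ) (α : Type) [Fintype α] : Fintype (Copies k α) :=
  inferInstanceAs (Fintype (Fin k × α))

/-- `H_ℓ`: the poset whose connected components are `ℓ` copies of `Λ₂` and one copy of
`Λ_{3(ℓ-1)}`. -/
def Hposet (ℓ : ℕ) : FinPartOrd.{0} :=
  FinPartOrd.of (Copies ℓ (WithTop (AntichainFin 2)) ⊕ WithTop (AntichainFin (3 * (ℓ - 1))))

/-- The poset `P₀` placed above a chain of `i` elements. -/
def withChain (P₀ : FinPartOrd.{0}) (i : ℕ) : FinPartOrd.{0} :=
  FinPartOrd.of (Fin i ⊕ₗ ↥P₀)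

/-- The disjoint union of two finite posets. -/
def disjSum (P R : FinPartOrd.{0}) : FinPartOrd.{0} := FinPartOrd.of (↥P ⊕ ↥R)

/-- The poset `P_iR_i`: the disjoint union of `P₀` and `R₀` each placed above a chain of
`i` elements. -/
def PRposet (P₀ R₀ : FinPartOrd.{0}) (i : ℕ) : FinPartOrd.{0} :=
  disjSum (withChain P₀ i) (withChain R₀ i)

/-- `C(P₀R₀) = |D(P₀)| + |D(R₀)| − |D(P₀) ∩ D(R₀)|`. -/
def CNum (P₀ R₀ : FinPartOrd.{0}) : ℕ :=
  (DAllSet P₀).ncard + (DAllSet R₀).ncard - (DAllSet P₀ ∩ DAllSet R₀).ncard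

/-- The vertices of the exchange graph: the downsets of `Q` of size `n`, as actual subsets. -/
def EGVert (n : ℕ) (Q : FinPartOrd.{0}) : Type :=
  {D : Finset ↥Q // IsDownset Q D ∧ D.card = n}

/-- The exchange graph `G_n(Q)`: two size-`n` downsets are adjacent iff they differ by
exactly one element. -/
def ExchangeGraph (n : ℕ) (Q : FinPartOrd.{0}) : SimpleGraph (EGVert n Q) where
  Adj X Y := (X.1 \ Y.1).card = 1 ∧ (Y.1 \ X.1).card = 1
  symm := ⟨fun X Y h => ⟨h.2, h.1⟩⟩
  loopless := ⟨fun X h => by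
    simp only [Finset.sdiff_self, Finset.card_empty] at h
    exact absurd h.1 (by simp)⟩

/-- The downset `D` of `Q`, viewed as a poset, is isomorphic (a "copy of") `P`. -/
def IsoTo (Q : FinPartOrd.{0}) (D : Finset ↥Q) (P : FinPartOrd.{0}) : Prop :=
  Nonempty (↥(subposet Q D) ≃o ↥P)

/-- A path `A :: M ++ [C]` in the exchange graph `G_n(Q)` whose first vertex is a copy of
`Pa`, whose last vertex is a copy of `Pb`, and all of whose internal vertices are copies of
`Pmid`. -/
def SpecialPath (n : ℕ) (Q : FinPartOrd.{0}) (Pa Pmid Pb : FinPartOrd.{0})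
    (A : EGVert n Q) (M : List (EGVert n Q)) (C : EGVert n Q) : Prop :=
  List.Chain' (ExchangeGraph n Q).Adj (A :: M ++ [C]) ∧
    IsoTo Q A.1 Pa ∧ IsoTo Q C.1 Pb ∧ ∀ v ∈ M, IsoTo Q v.1 Pmid

/-- `T` is an antichain in `Q`. -/
def IsAntichainIn (Q : FinPartOrd.{0}) (T : Finset ↥Q) : Prop :=
  ∀ x ∈ T, ∀ y ∈ T, x ≤ y → x = y

/-- The possible shapes of `A \ X` and `C \ X`: an antichain possibly together with a single
element below all of it and/or a single element above all of it, or a two-element chain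
together with one incomparable element. -/
def GoodForm (Q : FinPartOrd.{0}) (S : Finset ↥Q) : Prop :=
  (∃ T : Finset ↥Q, IsAntichainIn Q T ∧
    (S = T ∨
      (∃ b, b ∉ T ∧ S = insert b T ∧ ∀ x ∈ T, b < x) ∨
      (∃ t, t ∉ T ∧ S = insert t T ∧ ∀ x ∈ T, x < t) ∨
      (∃ b t, b ∉ T ∧ t ∉ T ∧ b ≠ t ∧ S = insert b (insert t T) ∧
        (∀ x ∈ T, b < x) ∧ ∀ x ∈ T, x < t))) ∨
  (∃ x y z : ↥Q, S = {x, y, z} ∧ x ≠ y ∧ x ≠ z ∧ y ≠ z ∧ x < y ∧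
    ¬x ≤ z ∧ ¬z ≤ x ∧ ¬y ≤ z ∧ ¬z ≤ y)


/-!
Every downset of `H_ℓ` is a *fan forest*: each element lies below at most one other and there
are no chains of length three. Sending each element to the element above it (or to itself) is
an idempotent map, and idempotents whose fixed points have the same fibre statistics are
conjugate; so a finite fan forest is determined up to isomorphism by its size and by how many
elements have exactly `k` elements below them, for each `k > 0`. For a `3ℓ`-element downset of
`H_ℓ` these numbers only record how many tops of copies of `Λ₂` it contains (`0, …, ℓ`), or that
it contains the top of `Λ_{3(ℓ-1)}`, which gives `ℓ + 2` classes.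

A witness `Q` contains a copy `D` of `ℓ Λ₂` and an element `t` with `3(ℓ-1)` elements below it.
No element of `D` lies below `t`: otherwise the downsets generated by `t` and by a top of `D`
above that element fit into `3ℓ` elements, and a `3ℓ`-element downset containing both is not a
fan forest. Hence `|Q| ≥ |D| + 3(ℓ-1) + 1 = 6ℓ - 2`.
-/

section Idempotent

variable {α β : Type*} [Fintype α] [Fintype β]

def fixCount (r : α → α) (k : ℕ) : ℕ := #{m | r m = m ∧ #{x | r x = m} = k}

lemma fixCount_zero (r : α → α) : fixCount r 0 = 0 := by
  rw [fixCount, card_eq_zero, filter_eq_empty_iff]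
  rintro m - ⟨hm, h0⟩
  rw [card_eq_zero, filter_eq_empty_iff] at h0
  exact h0 (mem_univ m) hm

lemma card_eq_sum_fixCount {r : α → α} (hr : ∀ x, r (r x) = r x) {N : ℕ}
    (hN : Fintype.card α < N) : Fintype.card α = ∑ k ∈ range N, k * fixCount r k := by
  have hfib : Fintype.card α = ∑ m ∈ {m | r m = m}, #{x | r x = m} := by
    rw [← card_univ]
    exact card_eq_sum_card_fiberwise fun x _ => mem_filter.2 ⟨mem_univ _, hr x⟩
  rw [hfib, ← sum_fiberwise_of_maps_to (g := fun m => #{x | r x = m}) (t := range N)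
    fun m _ => mem_range.2 ((card_le_univ _).trans_lt hN)]
  refine sum_congr rfl fun k _ => ?_
  rw [sum_congr rfl fun m hm => (mem_filter.1 hm).2, sum_const, smul_eq_mul, mul_comm,
    fixCount, filter_filter]

lemma fixCount_one_eq {r : α → α} {s : β → β} (hr : ∀ x, r (r x) = r x)
    (hs : ∀ y, s (s y) = s y) (hcard : Fintype.card α = Fintype.card β)
    (h : ∀ k ≠ 1, fixCount r k = fixCount s k) : fixCount r 1 = fixCount s 1 := by
  have hα : Fintype.card α < Fintype.card α + 2 := by omega
  have hβ : Fintype.card β < Fintype.card α + 2 := by omega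
  have h1 : 1 ∈ range (Fintype.card α + 2) := mem_range.2 (by omega)
  have hsum := (card_eq_sum_fixCount hr hα).symm.trans (hcard.trans (card_eq_sum_fixCount hs hβ))
  rw [sum_eq_add_sum_sdiff_singleton_of_mem h1, sum_eq_add_sum_sdiff_singleton_of_mem h1,
    sum_congr rfl fun k hk => by rw [h k (mem_singleton.not.1 (mem_sdiff.1 hk).2)]] at hsum
  omega

lemma exists_equiv_apply_eq {X Y : Type*} [Finite X] [Finite Y] (h : Nat.card X = Nat.card Y)
    (x : X) (y : Y) : ∃ f : X ≃ Y, f x = y := by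
  obtain ⟨g⟩ := Finite.card_eq.1 h
  exact ⟨g.trans (Equiv.swap (g x) y), by simp⟩

theorem exists_equiv_conj_of_fixCount_eq {r : α → α} {s : β → β} (hr : ∀ x, r (r x) = r x)
    (hs : ∀ y, s (s y) = s y) (h : ∀ k, fixCount r k = fixCount s k) :
    ∃ e : α ≃ β, ∀ x, e (r x) = s (e x) := by
  let ρ : α → {m // r m = m} := fun x => ⟨r x, hr x⟩
  let ρ' : β → {m // s m = m} := fun y => ⟨s y, hs y⟩
  have hρ : ∀ m, Nat.card {x // ρ x = m} = #{x | r x = m.1} := fun m => by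
    rw [Nat.card_eq_fintype_card, Fintype.card_subtype]
    simp only [ρ, Subtype.ext_iff]
  have hρ' : ∀ m, Nat.card {y // ρ' y = m} = #{y | s y = m.1} := fun m => by
    rw [Nat.card_eq_fintype_card, Fintype.card_subtype]
    simp only [ρ', Subtype.ext_iff]
  have hcount : ∀ k, Nat.card {m // Nat.card {x // ρ x = m} = k} =
      Nat.card {m // Nat.card {y // ρ' y = m} = k} := fun k => by
    simp only [hρ, hρ']
    rw [Nat.card_congr (Equiv.subtypeSubtypeEquivSubtypeInter (fun m => r m = m)
        fun m => #{x | r x = m} = k),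
      Nat.card_congr (Equiv.subtypeSubtypeEquivSubtypeInter (fun m => s m = m)
        fun m => #{y | s y = m} = k),
      Nat.card_eq_fintype_card, Nat.card_eq_fintype_card, Fintype.card_subtype,
      Fintype.card_subtype]
    exact h k
  -- Match fixed points with fibres of equal size, then the fibres, fixed point to fixed point.
  obtain ⟨σ, hσ⟩ : ∃ σ : {m // r m = m} ≃ {m // s m = m},
      ∀ m, Nat.card {y // ρ' y = σ m} = Nat.card {x // ρ x = m} :=
    ⟨_, Equiv.ofFiberEquiv_map fun k => (Finite.card_eq.1 (hcount k)).some⟩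
  choose τ hτ using fun m => exists_equiv_apply_eq (hσ m).symm ⟨m.1, Subtype.ext m.2⟩
    ⟨(σ m).1, Subtype.ext (σ m).2⟩
  let e := (Equiv.sigmaFiberEquiv ρ).symm.trans
    ((Equiv.sigmaCongr σ τ).trans (Equiv.sigmaFiberEquiv ρ'))
  have he : ∀ m x (hx : ρ x = m), e x = (τ m ⟨x, hx⟩).1 := by
    rintro m x rfl
    rfl
  refine ⟨e, fun x => ?_⟩
  rw [he (ρ x) (r x) (Subtype.ext (hr x)), he (ρ x) x rfl, hτ]
  exact (congrArg Subtype.val (τ (ρ x) ⟨x, rfl⟩).2).symm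

end Idempotent

section FanForest

variable {α β : Type*} [PartialOrder α] [PartialOrder β]

/-- The disjoint unions of posets `Λ_i`. -/
def IsFanForest (α : Type*) [PartialOrder α] : Prop :=
  (∀ ⦃x y z : α⦄, x < y → x < z → y = z) ∧ ∀ ⦃x y z : α⦄, x < y → ¬y < z

lemma IsFanForest.of_orderEmbedding (f : α ↪o β) (h : IsFanForest β) : IsFanForest α :=
  ⟨fun _ _ _ hxy hxz => f.injective (h.1 (f.lt_iff_lt.2 hxy) (f.lt_iff_lt.2 hxz)),
    fun _ _ _ hxy hyz => h.2 (f.lt_iff_lt.2 hxy) (f.lt_iff_lt.2 hyz)⟩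

lemma IsFanForest.isMax_of_lt (h : IsFanForest α) {x y : α} (hxy : x < y) : IsMax y :=
  fun _ hyz => (hyz.lt_or_eq.resolve_left (h.2 hxy)).ge

def fanRoot (x : α) : α := if h : ∃ y, x < y then h.choose else x

lemma fanRoot_eq_self_iff {x : α} : fanRoot x = x ↔ IsMax x := by
  rw [fanRoot, ← not_iff_not, not_isMax_iff]
  split_ifs with h
  · exact iff_of_true h.choose_spec.ne' h
  · exact iff_of_false (not_not.2 rfl) h

lemma IsFanForest.lt_iff_fanRoot (h : IsFanForest α) {x y : α} :
    x < y ↔ x ≠ y ∧ fanRoot x = y := by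
  refine ⟨fun hxy => ⟨hxy.ne, ?_⟩, fun ⟨hne, hxy⟩ => ?_⟩
  · have hex : ∃ y, x < y := ⟨y, hxy⟩
    rw [fanRoot, dif_pos hex]
    exact h.1 hex.choose_spec hxy
  · rw [fanRoot] at hxy
    split_ifs at hxy with hex
    · exact hxy ▸ hex.choose_spec
    · exact absurd hxy hne

lemma IsFanForest.fanRoot_idem (h : IsFanForest α) (x : α) : fanRoot (fanRoot x) = fanRoot x := by
  rw [fanRoot_eq_self_iff]
  by_cases hx : IsMax x
  · rwa [fanRoot_eq_self_iff.2 hx]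
  · obtain ⟨y, hxy⟩ := not_isMax_iff.1 hx
    rw [(h.lt_iff_fanRoot.1 hxy).2]
    exact h.isMax_of_lt hxy

lemma IsFanForest.fanRoot_eq_iff_le (h : IsFanForest α) {x m : α} (hm : IsMax m) :
    fanRoot x = m ↔ x ≤ m := by
  rw [le_iff_lt_or_eq, h.lt_iff_fanRoot]
  by_cases hxm : x = m
  · subst hxm
    simp [fanRoot_eq_self_iff.2 hm]
  · simp [hxm]

lemma IsFanForest.nonempty_orderIso_of_conj (hα : IsFanForest α) (hβ : IsFanForest β)
    (e : α ≃ β) (he : ∀ x, e (fanRoot x) = fanRoot (e x)) : Nonempty (α ≃o β) := by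
  have hlt : ∀ x y, e x < e y ↔ x < y := fun x y => by
    rw [hα.lt_iff_fanRoot, hβ.lt_iff_fanRoot, ← he, e.injective.ne_iff, e.injective.eq_iff]
  exact ⟨⟨e, fun {x y} => by simp only [le_iff_lt_or_eq, hlt, e.injective.eq_iff]⟩⟩

lemma card_le_two_of_isChain (h : ∀ ⦃x y z : α⦄, x < y → ¬y < z) {c : Finset α}
    (hc : IsChain (· ≤ ·) (c : Set α)) : #c ≤ 2 := by
  by_contra! hc3
  obtain ⟨a, ha, b, hb, d, hd, hab, had, hbd⟩ := two_lt_card.1 hc3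
  have hlt : ∀ {x y}, x ∈ c → y ∈ c → x ≠ y → x < y ∨ y < x := fun hx hy hxy =>
    (hc hx hy hxy).imp (lt_of_le_of_ne · hxy) (lt_of_le_of_ne · hxy.symm)
  -- any orientation of three comparable elements contains a chain of length three
  rcases hlt ha hb hab with h1 | h1 <;> rcases hlt hb hd hbd with h2 | h2 <;>
    rcases hlt ha hd had with h3 | h3 <;>
    first
    | exact h h1 h2 | exact h h2 h1 | exact h h1 h3 | exact h h3 h1 | exact h h2 h3
    | exact h h3 h2

variable [Fintype α] [Fintype β]

def lowerCard (x : α) : ℕ := #{y | y < x}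

def lowerProfile (α : Type*) [PartialOrder α] [Fintype α] (k : ℕ) : ℕ :=
  #{x : α | lowerCard x = k}

lemma lowerCard_map (e : α ≃o β) (x : α) : lowerCard (e x) = lowerCard x :=
  (card_equiv e.toEquiv fun y => by simp).symm

lemma lowerProfile_congr (e : α ≃o β) (k : ℕ) : lowerProfile α k = lowerProfile β k :=
  card_equiv e.toEquiv fun x => by simp [lowerCard_map]

lemma lowerCard_eq_zero_iff {x : α} : lowerCard x = 0 ↔ IsMin x := by
  simp [lowerCard, filter_eq_empty_iff, isMin_iff_forall_not_lt]

lemma card_filter_le_eq_lowerCard_add_one (x : α) : #{y | y ≤ x} = lowerCard x + 1 := by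
  rw [lowerCard, ← card_insert_of_notMem (s := {y | y < x}) (a := x) (by simp)]
  congr 1
  ext y
  simp [le_iff_lt_or_eq, or_comm]

lemma IsFanForest.disjoint_filter_le (h : IsFanForest α) {a b : α} (hab : a ≠ b)
    (ha : ¬IsMin a) (hb : ¬IsMin b) :
    Disjoint ({y | y ≤ a} : Finset α) ({y | y ≤ b} : Finset α) := by
  refine disjoint_left.2 fun y hya hyb => ?_
  simp only [mem_filter, mem_univ, true_and] at hya hyb
  obtain ⟨z, hz⟩ := not_isMin_iff.1 ha
  obtain ⟨z', hz'⟩ := not_isMin_iff.1 hb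
  rcases hya.lt_or_eq with hya | rfl <;> rcases hyb.lt_or_eq with hyb | rfl
  · exact hab (h.1 hya hyb)
  · exact h.2 hz' hya
  · exact h.2 hz hyb
  · exact hab rfl

lemma IsFanForest.fixCount_fanRoot (h : IsFanForest α) (k : ℕ) :
    fixCount (fanRoot (α := α)) (k + 2) = lowerProfile α (k + 1) := by
  refine congrArg card (filter_congr fun m _ => ⟨fun ⟨hm, hk⟩ => ?_, fun hk => ?_⟩)
  · simp only [h.fanRoot_eq_iff_le (fanRoot_eq_self_iff.1 hm),
      card_filter_le_eq_lowerCard_add_one] at hk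
    omega
  · obtain ⟨y, hy⟩ : ({y | y < m} : Finset α).Nonempty :=
      card_pos.1 (hk ▸ k.succ_pos : 0 < lowerCard m)
    have hm := h.isMax_of_lt (mem_filter.1 hy).2
    simp only [fanRoot_eq_self_iff.2 hm, h.fanRoot_eq_iff_le hm,
      card_filter_le_eq_lowerCard_add_one, hk, true_and]

theorem IsFanForest.nonempty_orderIso (hα : IsFanForest α) (hβ : IsFanForest β)
    (hcard : Fintype.card α = Fintype.card β)
    (h : ∀ k, 0 < k → lowerProfile α k = lowerProfile β k) : Nonempty (α ≃o β) := by
  have hne : ∀ k ≠ 1, fixCount (fanRoot (α := α)) k = fixCount (fanRoot (α := β)) k := by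
    rintro (_ | _ | k) hk
    · rw [fixCount_zero, fixCount_zero]
    · exact absurd rfl hk
    · rw [hα.fixCount_fanRoot, hβ.fixCount_fanRoot, h _ k.succ_pos]
  -- fibres of size one are the isolated points, whose number is forced by the size
  have hall : ∀ k, fixCount (fanRoot (α := α)) k = fixCount (fanRoot (α := β)) k := fun k => by
    rcases eq_or_ne k 1 with rfl | hk
    · exact fixCount_one_eq hα.fanRoot_idem hβ.fanRoot_idem hcard hne
    · exact hne k hk
  obtain ⟨e, he⟩ := exists_equiv_conj_of_fixCount_eq hα.fanRoot_idem hβ.fanRoot_idem hall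
  exact hα.nonempty_orderIso_of_conj hβ e he

end FanForest

section Downsets

variable {Q R : FinPartOrd.{0}} {n : ℕ} {D : Finset ↥Q}

lemma card_subposet (D : Finset ↥Q) : Fintype.card ↥(subposet Q D) = #D :=
  Fintype.card_coe D

lemma IsFanForest.restrict (h : IsFanForest ↥Q) (D : Finset ↥Q) : IsFanForest ↥(subposet Q D) :=
  h.of_orderEmbedding (OrderEmbedding.subtype _)

lemma IsFanForest.posetHeight_le_two (h : IsFanForest ↥Q) : posetHeight Q ≤ 2 :=
  csSup_le ⟨0, ∅, by simp⟩ fun _ ⟨_, hc, hk⟩ => hk ▸ card_le_two_of_isChain h.2 hc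

lemma isDownset_filter_le (x : ↥Q) : IsDownset Q {y | y ≤ x} := fun _ _ ha hba => by
  simp only [mem_filter, mem_univ, true_and] at ha ⊢
  exact hba.trans ha

lemma IsDownset.union {E : Finset ↥Q} (hD : IsDownset Q D) (hE : IsDownset Q E) :
    IsDownset Q (D ∪ E) :=
  fun _ _ ha hba => (mem_union.1 ha).elim (fun ha => mem_union_left _ (hD ha hba))
    fun ha => mem_union_right _ (hE ha hba)

lemma IsDownset.lowerCard_subposet (hD : IsDownset Q D) (x : ↥(subposet Q D)) :
    lowerCard x = lowerCard x.1 := by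
  refine card_nbij Subtype.val (fun y hy => ?_) Subtype.val_injective.injOn fun y hy => ?_
  · exact mem_filter.2 ⟨mem_univ _, (mem_filter.1 hy).2⟩
  · have hy : y < x.1 := (mem_filter.1 hy).2
    exact ⟨⟨y, hD x.2 hy.le⟩, mem_filter.2 ⟨mem_univ _, hy⟩, rfl⟩

lemma IsDownset.lowerProfile_subposet (hD : IsDownset Q D) (k : ℕ) :
    lowerProfile ↥(subposet Q D) k = #{x ∈ D | lowerCard x = k} := by
  refine card_nbij Subtype.val (fun y hy => ?_) Subtype.val_injective.injOn fun y hy => ?_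
  · exact mem_filter.2 ⟨y.2, hD.lowerCard_subposet y ▸ (mem_filter.1 hy).2⟩
  · obtain ⟨hyD, hy⟩ := mem_filter.1 hy
    exact ⟨⟨y, hyD⟩, mem_filter.2 ⟨mem_univ _, (hD.lowerCard_subposet ⟨y, hyD⟩).trans hy⟩, rfl⟩

lemma IsDownset.lowerCard_orderIso {E : Finset ↥R} (hD : IsDownset Q D) (hE : IsDownset R E)
    (e : ↥(subposet Q D) ≃o ↥(subposet R E)) (x : ↥(subposet Q D)) :
    lowerCard (e x).1 = lowerCard x.1 := by
  rw [← hD.lowerCard_subposet, ← hE.lowerCard_subposet, lowerCard_map]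

lemma IsDownset.exists_between {U : Finset ↥Q} (hD : IsDownset Q D) (hU : IsDownset Q U)
    (hDU : D ⊆ U) {m : ℕ} (hDm : #D ≤ m) (hmU : m ≤ #U) :
    ∃ E, IsDownset Q E ∧ D ⊆ E ∧ E ⊆ U ∧ #E = m := by
  induction m, hDm using Nat.le_induction with
  | base => exact ⟨D, hD, subset_rfl, hDU, rfl⟩
  | succ m _ ih =>
    obtain ⟨E, hE, hDE, hEU, rfl⟩ := ih (by omega)
    have hne : (U \ E).Nonempty := sdiff_nonempty.2 fun h => by
      have := card_le_card h
      omega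
    obtain ⟨x, hx⟩ := (U \ E).exists_minimal hne
    obtain ⟨hxU, hxE⟩ := mem_sdiff.1 hx.1
    refine ⟨insert x E, fun a b ha hba => ?_, hDE.trans (subset_insert _ _),
      insert_subset hxU hEU, card_insert_of_notMem hxE⟩
    rcases mem_insert.1 ha with rfl | ha
    · by_cases hbE : b ∈ E
      · exact mem_insert_of_mem hbE
      · rcases hba.lt_or_eq with hlt | rfl
        · exact absurd hlt (hx.not_lt (mem_sdiff.2 ⟨hU hxU hba, hbE⟩))
        · exact mem_insert_self _ _
    · exact mem_insert_of_mem (hE ha hba)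

lemma exists_orderIso_of_DSet_eq (h : DSet n Q = DSet n R) {D : Finset ↥R} (hD : IsDownset R D)
    (hc : #D = n) :
    ∃ E, IsDownset Q E ∧ #E = n ∧ Nonempty (↥(subposet Q E) ≃o ↥(subposet R D)) := by
  obtain ⟨E, hE, hEc, hcls⟩ : cls (subposet R D) ∈ DSet n Q := h ▸ ⟨D, hD, hc, rfl⟩
  exact ⟨E, hE, hEc, Quotient.exact hcls⟩

lemma IsFanForest.restrict_of_DSet_eq (hR : IsFanForest ↥R) (h : DSet n Q = DSet n R)
    (hD : IsDownset Q D) (hc : #D = n) : IsFanForest ↥(subposet Q D) := by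
  obtain ⟨E, -, -, ⟨e⟩⟩ := exists_orderIso_of_DSet_eq h.symm hD hc
  exact (hR.restrict E).of_orderEmbedding e.symm.toOrderEmbedding

lemma not_lt_of_forall_isFanForest
    (hff : ∀ E, IsDownset Q E → #E = n → IsFanForest ↥(subposet Q E)) (hn : n ≤ size Q)
    {x t u : ↥Q} (hxu : x ≤ u) (hu : ¬IsMin u) (htu : t ≠ u)
    (hcard : lowerCard t + lowerCard u + 1 ≤ n) : ¬x < t := by
  intro hxt
  have hx : x ∈ ({y | y ≤ t} : Finset ↥Q) ∩ ({y | y ≤ u} : Finset ↥Q) := by simp [hxt.le, hxu]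
  have hD₀ : #(({y | y ≤ t} : Finset ↥Q) ∪ ({y | y ≤ u} : Finset ↥Q)) ≤ n := by
    have := card_union_add_card_inter ({y | y ≤ t} : Finset ↥Q) ({y | y ≤ u} : Finset ↥Q)
    have := card_pos.2 ⟨x, hx⟩
    rw [card_filter_le_eq_lowerCard_add_one, card_filter_le_eq_lowerCard_add_one] at *
    omega
  -- in an `n`-element downset containing `t` and `u`, either `x` lies below both, or `x = u`
  -- lies in a chain `z < u < t`
  obtain ⟨E, hE, hD₀E, -, hEc⟩ :=
    ((isDownset_filter_le t).union (isDownset_filter_le u)).exists_between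
      (fun _ _ _ _ => mem_univ _) (subset_univ _) hD₀ (by rwa [card_univ])
  have hmem : ∀ y, y ≤ t ∨ y ≤ u → y ∈ E := fun y hy =>
    hD₀E (mem_union.2 (hy.imp (fun h => by simpa using h) fun h => by simpa using h))
  have hff := hff E hE hEc
  rcases hxu.lt_or_eq with hxu | rfl
  · exact htu (congrArg Subtype.val (hff.1 (x := ⟨x, hmem x (Or.inr hxu.le)⟩)
      (y := ⟨t, hmem t (Or.inl le_rfl)⟩) (z := ⟨u, hmem u (Or.inr le_rfl)⟩) hxt hxu))
  · obtain ⟨z, hz⟩ := not_isMin_iff.1 hu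
    exact hff.2 (x := ⟨z, hmem z (Or.inr hz.le)⟩) (y := ⟨x, hmem x (Or.inr le_rfl)⟩)
      (z := ⟨t, hmem t (Or.inl le_rfl)⟩) hz hxt

end Downsets

lemma card_antichainFin (n : ℕ) : Fintype.card (AntichainFin n) = n := Fintype.card_fin n

lemma card_withTop_antichainFin (n : ℕ) : Fintype.card (WithTop (AntichainFin n)) = n + 1 :=
  (Fintype.card_option (α := Fin n)).trans (congrArg (· + 1) (Fintype.card_fin n))

lemma AntichainFin.withTop_lt_iff {n : ℕ} {a b : WithTop (AntichainFin n)} :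
    a < b ↔ a ≠ ⊤ ∧ b = ⊤ := by
  induction b using WithTop.recTopCoe with
  | top => simp [WithTop.lt_top_iff_ne_top]
  | coe b =>
    simp only [WithTop.coe_ne_top, and_false, iff_false]
    induction a using WithTop.recTopCoe with
    | top => exact not_top_lt
    | coe a => exact fun h => (WithTop.coe_lt_coe.1 h).ne (WithTop.coe_lt_coe.1 h).le

lemma Copies.lt_iff {k : ℕ} {α : Type} [PartialOrder α] {x y : Copies k α} :
    x < y ↔ x.1 = y.1 ∧ x.2 < y.2 := by
  simp only [lt_iff_le_not_ge]
  show (x.1 = y.1 ∧ x.2 ≤ y.2) ∧ ¬(y.1 = x.1 ∧ y.2 ≤ x.2) ↔ _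
  constructor
  · rintro ⟨⟨h1, h2⟩, h3⟩
    exact ⟨h1, h2, fun h => h3 ⟨h1.symm, h⟩⟩
  · rintro ⟨h1, h2, h3⟩
    exact ⟨⟨h1, h2⟩, fun h => h3 h.2⟩

namespace Hposet

variable {l : ℕ}

-- `top i` and `leaf i a` make up the `i`-th copy of `Λ₂`; `bigTop` and `bigLeaf a` make up
-- `Λ_{3(ℓ-1)}`
def top (i : Fin l) : ↥(Hposet l) := Sum.inl (i, ⊤)

def leaf (i : Fin l) (a : AntichainFin 2) : ↥(Hposet l) :=
  Sum.inl (i, (a : WithTop (AntichainFin 2)))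

def bigTop : ↥(Hposet l) := Sum.inr ⊤

def bigLeaf (a : AntichainFin (3 * (l - 1))) : ↥(Hposet l) :=
  Sum.inr (a : WithTop (AntichainFin (3 * (l - 1))))

lemma elem_cases (x : ↥(Hposet l)) :
    (∃ i, x = top i) ∨ (∃ i a, x = leaf i a) ∨ x = bigTop ∨ ∃ a, x = bigLeaf a := by
  rcases x with ⟨i, _ | a⟩ | (_ | a)
  · exact Or.inl ⟨i, rfl⟩
  · exact Or.inr (Or.inl ⟨i, a, rfl⟩)
  · exact Or.inr (Or.inr (Or.inl rfl))
  · exact Or.inr (Or.inr (Or.inr ⟨a, rfl⟩))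

lemma top_injective : Function.Injective (top (l := l)) := fun _ _ h =>
  congrArg Prod.fst (Sum.inl_injective h)

lemma leaf_injective (i : Fin l) : Function.Injective (leaf i) := fun _ _ h =>
  WithTop.coe_injective (congrArg Prod.snd (Sum.inl_injective h))

lemma bigLeaf_injective : Function.Injective (bigLeaf (l := l)) := fun _ _ h =>
  WithTop.coe_injective (Sum.inr_injective h)

lemma eq_of_leaf_eq_leaf {i j : Fin l} {a b : AntichainFin 2} (h : leaf i a = leaf j b) :
    i = j :=
  congrArg Prod.fst (Sum.inl_injective h)

lemma top_ne_leaf (i j : Fin l) (a : AntichainFin 2) : top i ≠ leaf j a := fun h =>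
  WithTop.top_ne_coe (congrArg Prod.snd (Sum.inl_injective h))

lemma bigTop_ne_bigLeaf (a : AntichainFin (3 * (l - 1))) : bigTop ≠ bigLeaf a := fun h =>
  WithTop.top_ne_coe (Sum.inr_injective h)

lemma lt_iff {x y : ↥(Hposet l)} :
    x < y ↔ (∃ i a, x = leaf i a ∧ y = top i) ∨ ∃ a, x = bigLeaf a ∧ y = bigTop := by
  revert x y
  show ∀ x y : Copies l (WithTop (AntichainFin 2)) ⊕ WithTop (AntichainFin (3 * (l - 1))),
    x < y ↔ _
  intro x y
  rw [Sum.lt_def, Sum.liftRel_iff]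
  constructor
  · rintro (⟨a, c, hac, rfl, rfl⟩ | ⟨b, d, hbd, rfl, rfl⟩)
    · obtain ⟨h1, h2⟩ := Copies.lt_iff.1 hac
      obtain ⟨ha, hc⟩ := AntichainFin.withTop_lt_iff.1 h2
      obtain ⟨α, hα⟩ := WithTop.ne_top_iff_exists.1 ha
      exact Or.inl ⟨a.1, α, congrArg Sum.inl (Prod.ext rfl hα.symm),
        congrArg Sum.inl (Prod.ext h1.symm hc)⟩
    · obtain ⟨hb, rfl⟩ := AntichainFin.withTop_lt_iff.1 hbd
      obtain ⟨α, rfl⟩ := WithTop.ne_top_iff_exists.1 hb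
      exact Or.inr ⟨α, rfl, rfl⟩
  · rintro (⟨i, a, rfl, rfl⟩ | ⟨a, rfl, rfl⟩)
    · exact Or.inl ⟨(i, a), (i, ⊤),
        Copies.lt_iff.2 ⟨rfl, AntichainFin.withTop_lt_iff.2 ⟨WithTop.coe_ne_top, rfl⟩⟩, rfl, rfl⟩
    · exact Or.inr ⟨a, ⊤, AntichainFin.withTop_lt_iff.2 ⟨WithTop.coe_ne_top, rfl⟩, rfl, rfl⟩

lemma leaf_lt_top (i : Fin l) (a : AntichainFin 2) : leaf i a < top i :=
  lt_iff.2 (Or.inl ⟨i, a, rfl, rfl⟩)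

lemma bigLeaf_lt_bigTop (a : AntichainFin (3 * (l - 1))) : bigLeaf a < bigTop :=
  lt_iff.2 (Or.inr ⟨a, rfl, rfl⟩)

lemma isMin_of_lt {x y : ↥(Hposet l)} (h : x < y) : IsMin x := by
  refine isMin_iff_forall_not_lt.2 fun z hzx => ?_
  rcases lt_iff.1 h with ⟨i, a, rfl, -⟩ | ⟨a, rfl, -⟩ <;>
    rcases lt_iff.1 hzx with ⟨j, b, -, h'⟩ | ⟨b, -, h'⟩
  · exact top_ne_leaf _ _ _ h'.symm
  · exact Sum.inl_ne_inr h'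
  · exact Sum.inr_ne_inl h'
  · exact bigTop_ne_bigLeaf _ h'.symm

lemma isFanForest : IsFanForest ↥(Hposet l) := by
  refine ⟨fun x y z hxy hxz => ?_, fun x y z hxy hyz => (isMin_of_lt hyz).not_lt hxy⟩
  rcases lt_iff.1 hxy with ⟨i, a, rfl, rfl⟩ | ⟨a, rfl, rfl⟩ <;>
    rcases lt_iff.1 hxz with ⟨j, b, h, rfl⟩ | ⟨b, h, rfl⟩
  · rw [eq_of_leaf_eq_leaf h]
  · exact absurd h Sum.inl_ne_inr
  · exact absurd h Sum.inr_ne_inl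
  · rfl

lemma card_eq (hl : 1 ≤ l) : Fintype.card ↥(Hposet l) = 6 * l - 2 := by
  have h : Fintype.card (Copies l (WithTop (AntichainFin 2))) = l * 3 :=
    (Fintype.card_prod (Fin l) (Option (Fin 2))).trans (by simp)
  refine (Fintype.card_sum ..).trans ?_
  rw [h, card_withTop_antichainFin]
  omega

lemma filter_lt_top (i : Fin l) :
    ({y | y < top i} : Finset ↥(Hposet l)) = univ.map ⟨leaf i, leaf_injective i⟩ := by
  ext y
  simp only [mem_filter, mem_univ, true_and, mem_map, Function.Embedding.coeFn_mk]
  refine ⟨fun h => ?_, fun ⟨a, h⟩ => h ▸ leaf_lt_top i a⟩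
  rcases lt_iff.1 h with ⟨j, a, rfl, hij⟩ | ⟨a, -, hij⟩
  · exact ⟨a, by rw [top_injective hij]⟩
  · exact absurd hij Sum.inl_ne_inr

lemma filter_lt_bigTop :
    ({y | y < bigTop} : Finset ↥(Hposet l)) = univ.map ⟨bigLeaf, bigLeaf_injective⟩ := by
  ext y
  simp only [mem_filter, mem_univ, true_and, mem_map, Function.Embedding.coeFn_mk]
  refine ⟨fun h => ?_, fun ⟨a, h⟩ => h ▸ bigLeaf_lt_bigTop a⟩
  rcases lt_iff.1 h with ⟨j, a, -, h⟩ | ⟨a, rfl, -⟩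
  · exact absurd h Sum.inr_ne_inl
  · exact ⟨a, rfl⟩

lemma lowerCard_top (i : Fin l) : lowerCard (top i) = 2 := by
  rw [lowerCard, filter_lt_top, card_map, card_univ, card_antichainFin]

lemma lowerCard_bigTop : lowerCard (bigTop : ↥(Hposet l)) = 3 * (l - 1) := by
  rw [lowerCard, filter_lt_bigTop, card_map, card_univ, card_antichainFin]

lemma lowerCard_leaf (i : Fin l) (a : AntichainFin 2) : lowerCard (leaf i a) = 0 :=
  lowerCard_eq_zero_iff.2 (isMin_of_lt (leaf_lt_top i a))

lemma lowerCard_bigLeaf (a : AntichainFin (3 * (l - 1))) : lowerCard (bigLeaf a) = 0 :=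
  lowerCard_eq_zero_iff.2 (isMin_of_lt (bigLeaf_lt_bigTop a))

lemma not_isMin_top (i : Fin l) : ¬IsMin (top i) :=
  lowerCard_eq_zero_iff.not.1 (by rw [lowerCard_top]; omega)

lemma not_isMin_bigTop (hl : 2 ≤ l) : ¬IsMin (bigTop : ↥(Hposet l)) :=
  lowerCard_eq_zero_iff.not.1 (by rw [lowerCard_bigTop]; omega)

lemma lowerCard_eq_iff {x : ↥(Hposet l)} {k : ℕ} (hk : 0 < k) :
    lowerCard x = k ↔ (k = 2 ∧ ∃ i, x = top i) ∨ (k = 3 * (l - 1) ∧ x = bigTop) := by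
  rcases elem_cases x with ⟨i, rfl⟩ | ⟨i, a, rfl⟩ | rfl | ⟨a, rfl⟩
  · rw [lowerCard_top]
    refine ⟨fun h => Or.inl ⟨h.symm, i, rfl⟩, ?_⟩
    rintro (⟨rfl, -⟩ | ⟨-, h⟩)
    · rfl
    · exact absurd h Sum.inl_ne_inr
  · rw [lowerCard_leaf]
    refine iff_of_false hk.ne ?_
    rintro (⟨-, j, h⟩ | ⟨-, h⟩)
    · exact top_ne_leaf _ _ _ h.symm
    · exact Sum.inl_ne_inr h
  · rw [lowerCard_bigTop]
    refine ⟨fun h => Or.inr ⟨h.symm, rfl⟩, ?_⟩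
    rintro (⟨-, j, h⟩ | ⟨rfl, -⟩)
    · exact absurd h Sum.inr_ne_inl
    · rfl
  · rw [lowerCard_bigLeaf]
    refine iff_of_false hk.ne ?_
    rintro (⟨-, j, h⟩ | ⟨-, h⟩)
    · exact Sum.inr_ne_inl h
    · exact bigTop_ne_bigLeaf _ h.symm

lemma filter_not_isMin_subset :
    ({x | ¬IsMin x} : Finset ↥(Hposet l)) ⊆ insert bigTop (univ.map ⟨top, top_injective⟩) := by
  intro x hx
  have hx : ¬IsMin x := (mem_filter.1 hx).2
  rcases elem_cases x with ⟨i, rfl⟩ | ⟨i, a, rfl⟩ | rfl | ⟨a, rfl⟩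
  · exact mem_insert_of_mem (mem_map_of_mem _ (mem_univ i))
  · exact absurd (isMin_of_lt (leaf_lt_top i a)) hx
  · exact mem_insert_self _ _
  · exact absurd (isMin_of_lt (bigLeaf_lt_bigTop a)) hx

lemma le_card_filter_isMin (hl : 2 ≤ l) : 3 * l ≤ #({x | IsMin x} : Finset ↥(Hposet l)) := by
  have h1 := card_le_card (filter_not_isMin_subset (l := l))
  have h2 := card_filter_add_card_filter_not (s := (univ : Finset ↥(Hposet l))) fun x => IsMin x
  rw [card_univ, card_eq (by omega)] at h2
  have h3 := card_insert_le (bigTop : ↥(Hposet l)) (univ.map ⟨top, top_injective⟩)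
  rw [card_map, card_univ, Fintype.card_fin] at h3
  omega

def numTops (D : Finset ↥(Hposet l)) : ℕ := #{i | top i ∈ D}

/-- Indexes the isomorphism types of `3ℓ`-element downsets (`nonempty_orderIso_iff_kind_eq`). -/
def kind (D : Finset ↥(Hposet l)) : ℕ := if bigTop ∈ D then l + 1 else numTops D

def blocks (J : Finset (Fin l)) : Finset ↥(Hposet l) := {x | ∃ i ∈ J, x ≤ top i}

lemma numTops_le (D : Finset ↥(Hposet l)) : numTops D ≤ l :=
  (card_filter_le _ _).trans (card_fin l).le

lemma kind_le (D : Finset ↥(Hposet l)) : kind D ≤ l + 1 := by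
  unfold kind
  split_ifs
  · rfl
  · exact (numTops_le D).trans (Nat.le_succ l)

lemma lowerProfile_subposet {D : Finset ↥(Hposet l)} (hD : IsDownset (Hposet l) D) {k : ℕ}
    (hk : 0 < k) : lowerProfile ↥(subposet (Hposet l) D) k =
      if k = 2 then numTops D else if k = 3 * (l - 1) ∧ bigTop ∈ D then 1 else 0 := by
  rw [hD.lowerProfile_subposet, filter_congr fun x _ => lowerCard_eq_iff hk]
  split_ifs with h2 h3
  · subst h2
    rw [numTops, ← card_map ⟨top, top_injective⟩]
    congr 1
    ext x
    simp only [mem_filter, mem_map, mem_univ, true_and, Function.Embedding.coeFn_mk]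
    constructor
    · rintro ⟨hx, ⟨i, rfl⟩ | ⟨h, -⟩⟩
      · exact ⟨i, hx, rfl⟩
      · omega
    · rintro ⟨i, hi, rfl⟩
      exact ⟨hi, Or.inl ⟨i, rfl⟩⟩
  · rw [card_eq_one]
    refine ⟨bigTop, eq_singleton_iff_unique_mem.2 ⟨mem_filter.2 ⟨h3.2, Or.inr ⟨h3.1, rfl⟩⟩, ?_⟩⟩
    rintro x hx
    rcases (mem_filter.1 hx).2 with ⟨h, -⟩ | ⟨-, rfl⟩
    · exact absurd h h2
    · rfl
  · rw [card_eq_zero, filter_eq_empty_iff]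
    rintro x hx (⟨h, -⟩ | ⟨h, rfl⟩)
    · exact h2 h
    · exact h3 ⟨h, hx⟩

lemma numTops_eq_zero_of_bigTop_mem (hl : 2 ≤ l) {D : Finset ↥(Hposet l)}
    (hD : IsDownset (Hposet l) D) (hcard : #D = 3 * l) (hbig : bigTop ∈ D) : numTops D = 0 := by
  rw [numTops, card_eq_zero, filter_eq_empty_iff]
  intro i _ hi
  have hsub : ({y | y ≤ bigTop} : Finset ↥(Hposet l)) ∪ ({y | y ≤ top i} : Finset _) ⊆ D :=
    union_subset (fun y hy => hD hbig (mem_filter.1 hy).2) fun y hy => hD hi (mem_filter.1 hy).2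
  have hdisj := isFanForest.disjoint_filter_le (a := bigTop) (b := top i) Sum.inr_ne_inl
    (not_isMin_bigTop hl) (not_isMin_top i)
  have := card_le_card hsub
  rw [card_union_of_disjoint hdisj, card_filter_le_eq_lowerCard_add_one,
    card_filter_le_eq_lowerCard_add_one, lowerCard_bigTop, lowerCard_top] at this
  omega

lemma isDownset_blocks (J : Finset (Fin l)) : IsDownset (Hposet l) (blocks J) := fun _ _ ha hba =>
  have ⟨i, hi, hai⟩ := (mem_filter.1 ha).2
  mem_filter.2 ⟨mem_univ _, i, hi, hba.trans hai⟩

lemma top_mem_blocks {J : Finset (Fin l)} {i : Fin l} : top i ∈ blocks J ↔ i ∈ J := by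
  refine ⟨fun h => ?_, fun h => mem_filter.2 ⟨mem_univ _, i, h, le_rfl⟩⟩
  obtain ⟨j, hj, hij⟩ := (mem_filter.1 h).2
  rcases hij.lt_or_eq with hij | hij
  · exact absurd (isMin_of_lt hij) (not_isMin_top i)
  · rwa [top_injective hij]

lemma bigTop_notMem_blocks (hl : 2 ≤ l) (J : Finset (Fin l)) : bigTop ∉ blocks J := fun h => by
  obtain ⟨j, -, hj⟩ := (mem_filter.1 h).2
  rcases hj.lt_or_eq with hj | hj
  · exact not_isMin_bigTop hl (isMin_of_lt hj)
  · exact Sum.inr_ne_inl hj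

lemma card_blocks (J : Finset (Fin l)) : #(blocks J) = 3 * #J := by
  have hJ : blocks J = J.biUnion fun i => {x | x ≤ top i} := by
    ext x
    simp [blocks]
  rw [hJ, card_biUnion fun i _ j _ hij =>
    isFanForest.disjoint_filter_le (top_injective.ne hij) (not_isMin_top i) (not_isMin_top j)]
  simp [card_filter_le_eq_lowerCard_add_one, lowerCard_top, mul_comm]

lemma exists_downset_numTops_eq (hl : 2 ≤ l) {t : ℕ} (ht : t ≤ l) :
    ∃ D, IsDownset (Hposet l) D ∧ #D = 3 * l ∧ bigTop ∉ D ∧ numTops D = t := by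
  obtain ⟨J, -, hJ⟩ := exists_subset_card_eq (s := (univ : Finset (Fin l))) (n := t)
    (by rw [card_univ, Fintype.card_fin]; omega)
  -- `t` full copies of `Λ₂`, filled up with minimal elements
  have hU : IsDownset (Hposet l) (blocks J ∪ ({x | IsMin x} : Finset ↥(Hposet l))) :=
    (isDownset_blocks J).union
      fun a _ ha hba => mem_filter.2 ⟨mem_univ _, IsMin.mono (a := a) (mem_filter.1 ha).2 hba⟩
  obtain ⟨D, hD, hJD, hDU, hcard⟩ := (isDownset_blocks J).exists_between hU subset_union_left
    (by rw [card_blocks]; omega)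
    ((le_card_filter_isMin hl).trans (card_le_card subset_union_right))
  have htop : ∀ i, top i ∈ D ↔ i ∈ J := fun i =>
    ⟨fun h => top_mem_blocks.1 ((mem_union.1 (hDU h)).resolve_right
      fun h => not_isMin_top i (mem_filter.1 h).2), fun h => hJD (top_mem_blocks.2 h)⟩
  refine ⟨D, hD, hcard, fun h => (mem_union.1 (hDU h)).elim (bigTop_notMem_blocks hl J)
    fun h => not_isMin_bigTop hl (mem_filter.1 h).2, ?_⟩
  rw [numTops, filter_congr fun i _ => htop i, filter_mem_eq_inter, univ_inter, hJ]

lemma exists_downset_bigTop_mem (hl : 2 ≤ l) :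
    ∃ D, IsDownset (Hposet l) D ∧ #D = 3 * l ∧ bigTop ∈ D := by
  have hsub : #({y | y ≤ bigTop} : Finset ↥(Hposet l)) ≤ 3 * l := by
    rw [card_filter_le_eq_lowerCard_add_one, lowerCard_bigTop]
    omega
  obtain ⟨D, hD, hbig, -, hcard⟩ := (isDownset_filter_le bigTop).exists_between
    (fun _ _ _ _ => mem_univ _) (subset_univ _) hsub
    (by rw [card_univ, card_eq (by omega)]; omega)
  exact ⟨D, hD, hcard, hbig (mem_filter.2 ⟨mem_univ _, le_rfl⟩)⟩

lemma exists_downset_kind_eq (hl : 2 ≤ l) {t : ℕ} (ht : t ≤ l + 1) :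
    ∃ D, IsDownset (Hposet l) D ∧ #D = 3 * l ∧ kind D = t := by
  rcases ht.lt_or_eq with ht | rfl
  · obtain ⟨D, hD, hcard, hbig, htops⟩ := exists_downset_numTops_eq hl (Nat.lt_succ_iff.1 ht)
    exact ⟨D, hD, hcard, by rw [kind, if_neg hbig, htops]⟩
  · obtain ⟨D, hD, hcard, hbig⟩ := exists_downset_bigTop_mem hl
    exact ⟨D, hD, hcard, if_pos hbig⟩

lemma kind_eq_kind_iff (hl : 2 ≤ l) {D E : Finset ↥(Hposet l)} (hD : IsDownset (Hposet l) D)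
    (hE : IsDownset (Hposet l) E) (hDc : #D = 3 * l) (hEc : #E = 3 * l) :
    kind D = kind E ↔ numTops D = numTops E ∧ (bigTop ∈ D ↔ bigTop ∈ E) := by
  have := numTops_le D
  have := numTops_le E
  unfold kind
  by_cases hd : bigTop ∈ D <;> by_cases he : bigTop ∈ E
  · simp [hd, he, numTops_eq_zero_of_bigTop_mem hl hD hDc hd,
      numTops_eq_zero_of_bigTop_mem hl hE hEc he]
  · rw [if_pos hd, if_neg he]
    exact iff_of_false (by omega) fun h => he (h.2.1 hd)
  · rw [if_neg hd, if_pos he]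
    exact iff_of_false (by omega) fun h => hd (h.2.2 he)
  · simp [hd, he]

theorem nonempty_orderIso_iff_kind_eq (hl : 2 ≤ l) {D E : Finset ↥(Hposet l)}
    (hD : IsDownset (Hposet l) D) (hE : IsDownset (Hposet l) E) (hDc : #D = 3 * l)
    (hEc : #E = 3 * l) :
    Nonempty (↥(subposet (Hposet l) D) ≃o ↥(subposet (Hposet l) E)) ↔ kind D = kind E := by
  rw [kind_eq_kind_iff hl hD hE hDc hEc]
  constructor
  · rintro ⟨e⟩
    have h2 := lowerProfile_congr e 2
    have h3 := lowerProfile_congr e (3 * (l - 1))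
    rw [lowerProfile_subposet hD two_pos, lowerProfile_subposet hE two_pos, if_pos rfl,
      if_pos rfl] at h2
    have h32 : 3 * (l - 1) ≠ 2 := by omega
    rw [lowerProfile_subposet hD (by omega), lowerProfile_subposet hE (by omega)] at h3
    simp only [h32, if_false, true_and] at h3
    refine ⟨h2, ?_⟩
    split_ifs at h3 with hd he he <;> simp_all
  · rintro ⟨htops, hbig⟩
    refine IsFanForest.nonempty_orderIso (isFanForest.restrict D) (isFanForest.restrict E)
      (by rw [card_subposet, card_subposet, hDc, hEc]) fun k hk => ?_
    simp only [lowerProfile_subposet hD hk, lowerProfile_subposet hE hk, htops, hbig]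

theorem ncard_DSet (hl : 2 ≤ l) : (DSet (3 * l) (Hposet l)).ncard = l + 2 := by
  choose D hD hcard hkind using fun t (ht : t ∈ Set.Iic (l + 1)) => exists_downset_kind_eq hl ht
  refine (Set.ncard_congr (t := DSet (3 * l) (Hposet l))
    (fun t ht => cls (subposet (Hposet l) (D t ht)))
    (fun t ht => ⟨D t ht, hD t ht, hcard t ht, rfl⟩) (fun s t hs ht h => ?_) ?_).symm.trans ?_
  · rw [← hkind s hs, ← hkind t ht]
    exact (nonempty_orderIso_iff_kind_eq hl (hD s hs) (hD t ht) (hcard s hs) (hcard t ht)).1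
      (Quotient.exact h)
  · rintro _ ⟨E, hE, hEc, rfl⟩
    refine ⟨kind E, kind_le E, Quotient.sound ?_⟩
    exact (nonempty_orderIso_iff_kind_eq hl (hD _ _) hE (hcard _ _) hEc).2 (hkind _ _)
  · rw [← coe_Iic, Set.ncard_coe_finset, Nat.card_Iic]

lemma exists_le_top {D : Finset ↥(Hposet l)} (hD : IsDownset (Hposet l) D)
    (hcard : #D = 3 * l) (htops : numTops D = l) {x : ↥(Hposet l)} (hx : x ∈ D) :
    ∃ i, x ≤ top i ∧ top i ∈ D := by
  have hall := eq_univ_of_card _ (htops.trans (Fintype.card_fin l).symm)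
  have hmem : ∀ i, top i ∈ D := fun i => by
    have hi : i ∈ ({i | top i ∈ D} : Finset (Fin l)) := by
      rw [hall]
      exact mem_univ i
    exact (mem_filter.1 hi).2
  have hsub : blocks univ ⊆ D := fun y hy =>
    have ⟨i, _, hyi⟩ := (mem_filter.1 hy).2
    hD (hmem i) hyi
  have heq := eq_of_subset_of_card_le hsub (by rw [hcard, card_blocks, card_univ, Fintype.card_fin])
  obtain ⟨i, -, hxi⟩ := (mem_filter.1 (heq ▸ hx)).2
  exact ⟨i, hxi, hmem i⟩

variable {Q : FinPartOrd.{0}}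

lemma exists_lowerCard_eq_of_isWitness (hl : 2 ≤ l)
    (hQ : IsWitness (3 * l) (DSet (3 * l) (Hposet l)) Q) : ∃ t : ↥Q, lowerCard t = 3 * (l - 1) := by
  obtain ⟨D, hD, hc, hbig⟩ := exists_downset_bigTop_mem hl
  obtain ⟨E, hE, -, ⟨e⟩⟩ := exists_orderIso_of_DSet_eq hQ hD hc
  exact ⟨(e.symm ⟨bigTop, hbig⟩).1, (hD.lowerCard_orderIso hE e.symm _).trans lowerCard_bigTop⟩

lemma exists_downset_of_isWitness (hl : 2 ≤ l)
    (hQ : IsWitness (3 * l) (DSet (3 * l) (Hposet l)) Q) :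
    ∃ D, IsDownset Q D ∧ #D = 3 * l ∧ (∀ x ∈ D, lowerCard x ≠ 3 * (l - 1)) ∧
      ∀ x ∈ D, ∃ u ∈ D, x ≤ u ∧ lowerCard u = 2 := by
  obtain ⟨D, hD, hc, hbig, htops⟩ := exists_downset_numTops_eq hl le_rfl
  obtain ⟨E, hE, hEc, ⟨e⟩⟩ := exists_orderIso_of_DSet_eq hQ hD hc
  refine ⟨E, hE, hEc, fun x hx hx3 => ?_, fun x hx => ?_⟩
  · rw [← hE.lowerCard_orderIso hD e ⟨x, hx⟩, lowerCard_eq_iff (by omega)] at hx3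
    rcases hx3 with ⟨h, -⟩ | ⟨-, h⟩
    · omega
    · exact hbig (h ▸ (e ⟨x, hx⟩).2)
  · obtain ⟨i, hle, hi⟩ := exists_le_top hD hc htops (e ⟨x, hx⟩).2
    refine ⟨(e.symm ⟨top i, hi⟩).1, (e.symm _).2, ?_,
      (hD.lowerCard_orderIso hE e.symm _).trans (lowerCard_top i)⟩
    have hxu : (⟨x, hx⟩ : ↥(subposet Q E)) ≤ e.symm ⟨top i, hi⟩ := by
      rw [← e.symm_apply_apply ⟨x, hx⟩]
      exact e.symm.monotone hle
    exact hxu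

theorem le_size_of_isWitness (hl : 2 ≤ l) (hQ : IsWitness (3 * l) (DSet (3 * l) (Hposet l)) Q) :
    6 * l - 2 ≤ size Q := by
  obtain ⟨t, ht⟩ := exists_lowerCard_eq_of_isWitness hl hQ
  obtain ⟨D, hD, hc, hnot, hup⟩ := exists_downset_of_isWitness hl hQ
  have hn : 3 * l ≤ size Q := hc ▸ card_le_univ D
  have hdisj : Disjoint D ({y | y ≤ t} : Finset ↥Q) := by
    refine disjoint_left.2 fun x hx hxt => ?_
    rcases (mem_filter.1 hxt).2.lt_or_eq with hxt | rfl
    · obtain ⟨u, hu, hxu, hu2⟩ := hup x hx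
      exact not_lt_of_forall_isFanForest (fun E => isFanForest.restrict_of_DSet_eq hQ) hn hxu
        (lowerCard_eq_zero_iff.not.1 (by omega)) (fun htu => hnot u hu (htu ▸ ht)) (by omega) hxt
    · exact hnot x hx ht
  calc 6 * l - 2 = #(D ∪ ({y | y ≤ t} : Finset ↥Q)) := by
        rw [card_union_of_disjoint hdisj, hc, card_filter_le_eq_lowerCard_add_one, ht]
        omega
    _ ≤ size Q := card_le_univ _

end Hposet

/-- For `ℓ ≥ 2`, the set `D_{3ℓ}(H_ℓ)` has the witness `H_ℓ`, has
`k = ℓ + 2` members of size `n = 3ℓ`, its smallest witness has size `6ℓ − 2`, every member of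
`D_{3ℓ}(H_ℓ)` and `H_ℓ` itself have height at most `2`, and `6ℓ − 2 > 4ℓ + 2 + c` whenever
`ℓ > 2 + c/2`. -/
theorem H_family (l : ℕ) (hl : 2 ≤ l) :
    IsWitness (3 * l) (DSet (3 * l) (Hposet l)) (Hposet l) ∧
      (DSet (3 * l) (Hposet l)).ncard = l + 2 ∧
      (∀ x ∈ DSet (3 * l) (Hposet l), usize x = 3 * l) ∧
      size (Hposet l) = 6 * l - 2 ∧
      (∀ Q : FinPartOrd.{0}, IsWitness (3 * l) (DSet (3 * l) (Hposet l)) Q →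
        6 * l - 2 ≤ size Q) ∧
      posetHeight (Hposet l) ≤ 2 ∧
      (∀ R : FinPartOrd.{0}, cls R ∈ DSet (3 * l) (Hposet l) → posetHeight R ≤ 2) ∧
      ∀ c : ℕ, 4 + c < 2 * l → 3 * l + (l + 2) + c < 6 * l - 2 := by
  refine ⟨rfl, Hposet.ncard_DSet hl, ?_, Hposet.card_eq (by omega),
    fun Q => Hposet.le_size_of_isWitness hl, Hposet.isFanForest.posetHeight_le_two, ?_,
    fun c hc => by omega⟩
  · rintro _ ⟨D, -, hc, rfl⟩
    exact (card_subposet D).trans hc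
  · rintro R ⟨D, -, -, hR⟩
    obtain ⟨e⟩ := Quotient.exact hR
    exact ((Hposet.isFanForest.restrict D).of_orderEmbedding
      e.symm.toOrderEmbedding).posetHeight_le_two
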